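/- Let P = {1,…,n} and fix a repository on P with K = ∅ (all dependencies are unknown), at most u unknown dependencies (|U| ≤ u), at most c conflicts (|C| ≤ c), and at most d defective packages. For each i ∈ {0,1,…,u} let F_i be a family of subsets of P satisfying the (≤d+c+(u−i)+1, ≤i+2)-covering property, and let the query family be T = F₀ ∪ F₁ ∪ … ∪ F_u. Then the feedback on T determines the full structure of the repository: for every p ∈ P, p is defective if and only if S(p) = ∅; for all p, q ∈ P, p and q weakly conflict if and only if S(p) ∩ S(q) = ∅; and for all p, q ∈ P, p weakly depends on q if and only if S(p) ⊆ S(q). -/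
import Mathlib


/-- A software repository on package set `Fin n`: known dependencies `K`,
unknown dependencies `U`, conflicts `C` (unordered pairs of distinct packages),
and broken packages `B`. -/
structure Repo (n : ℕ) where
  K : Finset (Fin n × Fin n)
  U : Finset (Fin n × Fin n)
  C : Finset (Sym2 (Fin n))
  B : Finset (Fin n)
  hC : ∀ s ∈ C, ¬ s.IsDiag

/-- An installation `I` is successful if it avoids broken packages, is closed
under all (known and unknown) dependencies, and contains no conflicting pair. -/
def Successful {n : ℕ} (R : Repo n) (I : Finset (Fin n)) : Prop :=
  Disjoint I R.B ∧
  (∀ e ∈ R.K ∪ R.U, e.1 ∈ I → e.2 ∈ I) ∧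
  (∀ s ∈ R.C, ¬ ∀ x ∈ s, x ∈ I)

/-- A package is defective if no successful installation contains it. -/
def Defective {n : ℕ} (R : Repo n) (p : Fin n) : Prop :=
  ∀ I : Finset (Fin n), Successful R I → p ∉ I

/-- The set of defective packages. -/
def DefSet {n : ℕ} (R : Repo n) : Set (Fin n) := {p | Defective R p}

/-- Two packages weakly conflict if no successful installation contains both. -/
def WeakConflict {n : ℕ} (R : Repo n) (p q : Fin n) : Prop :=
  ∀ I : Finset (Fin n), Successful R I → ¬ (p ∈ I ∧ q ∈ I)

/-- `p` weakly depends on `q` if every successful installation containing `p`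
also contains `q`. -/
def WeakDep {n : ℕ} (R : Repo n) (p q : Fin n) : Prop :=
  ∀ I : Finset (Fin n), Successful R I → p ∈ I → q ∈ I

/-- The weakly-conflicting pairs of non-defective packages (each unordered pair
counted once via `<`). -/
def WeakConflictPairs {n : ℕ} (R : Repo n) : Set (Fin n × Fin n) :=
  {pq | pq.1 < pq.2 ∧ ¬ Defective R pq.1 ∧ ¬ Defective R pq.2 ∧
    WeakConflict R pq.1 pq.2}

/-- `(n,a,b)`-cover-free family. -/
def IsCFF (n a b : ℕ) (T : Finset (Finset (Fin n))) : Prop :=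
  ∀ S₁ S₂ : Finset (Fin n), Disjoint S₁ S₂ → S₁.card = a → S₂.card = b →
    ∃ v ∈ T, Disjoint v S₁ ∧ S₂ ⊆ v

/-- The `(≤a, ≤b)`-covering property. -/
def CoveringLE (n a b : ℕ) (F : Finset (Finset (Fin n))) : Prop :=
  ∀ S₁ S₂ : Finset (Fin n), Disjoint S₁ S₂ → S₁.card ≤ a →
    1 ≤ S₂.card → S₂.card ≤ b → ∃ v ∈ F, Disjoint v S₁ ∧ S₂ ⊆ v

/-- The digraph of known dependencies is acyclic. -/
def Acyclic {n : ℕ} (K : Finset (Fin n × Fin n)) : Prop :=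
  ∀ p : Fin n, ¬ Relation.TransGen (fun x y => (x, y) ∈ K) p p

open Classical in
/-- The `K`-closure of `v`: everything reachable from `v` along `K`-edges. -/
noncomputable def kclosure {n : ℕ} (K : Finset (Fin n × Fin n))
    (v : Finset (Fin n)) : Finset (Fin n) :=
  Finset.univ.filter
    (fun p => ∃ q ∈ v, Relation.ReflTransGen (fun x y => (x, y) ∈ K) q p)

/-- `Sset R T p`: the queries of `T` that are successful installations
containing `p`. -/
def Sset {n : ℕ} (R : Repo n) (T : Finset (Finset (Fin n))) (p : Fin n) :
    Set (Finset (Fin n)) :=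
  {t | t ∈ T ∧ Successful R t ∧ p ∈ t}


/-- Key lemma: from a successful installation containing a small set `S₀` and
disjoint from a small set `Q`, we can find a successful query in the union
family containing `S₀` and disjoint from `Q`. -/
lemma key_lemma {n u c d : ℕ} (R : Repo n)
    (hK : R.K = ∅) (hU : R.U.card ≤ u) (hCc : R.C.card ≤ c)
    (hd : (DefSet R).ncard ≤ d)
    (F : ℕ → Finset (Finset (Fin n)))
    (hF : ∀ i ≤ u, CoveringLE n (d + c + (u - i) + 1) (i + 2) (F i))
    (I : Finset (Fin n)) (hI : Successful R I)
    (S₀ : Finset (Fin n)) (hS₀I : S₀ ⊆ I) (h1 : S₀.Nonempty) (h2 : S₀.card ≤ 2)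
    (Q : Finset (Fin n)) (hQ : Disjoint Q I) (hQ1 : Q.card ≤ 1) :
    ∃ v ∈ (Finset.range (u + 1)).biUnion F,
      Successful R v ∧ S₀ ⊆ v ∧ Disjoint v Q := by
  classical
  set D := kclosure R.U S₀ with hD
  have hmemD : ∀ p, p ∈ D ↔
      ∃ q ∈ S₀, Relation.ReflTransGen (fun x y => (x, y) ∈ R.U) q p := by
    intro p; simp [hD, kclosure]
  have hS₀D : S₀ ⊆ D := fun p hp => (hmemD p).2 ⟨p, hp, Relation.ReflTransGen.refl⟩
  have hclosedI : ∀ e ∈ R.U, e.1 ∈ I → e.2 ∈ I := by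
    intro e he h1e
    exact hI.2.1 e (by simp [hK, he]) h1e
  have hDI : D ⊆ I := by
    intro p hp
    obtain ⟨q, hq, hr⟩ := (hmemD p).1 hp
    clear hp
    induction hr with
    | refl => exact hS₀I hq
    | tail _ h ih => exact hclosedI _ h ih
  have hDclosed : ∀ e ∈ R.U, e.1 ∈ D → e.2 ∈ D := by
    intro e he h1e
    obtain ⟨q, hq, hr⟩ := (hmemD e.1).1 h1e
    exact (hmemD e.2).2 ⟨q, hq, hr.tail he⟩
  set Uin := R.U.filter (fun e => e.1 ∈ D) with hUin
  set i := Uin.card with hi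
  set Uout := R.U.filter (fun e => ¬ e.1 ∈ D) with hUout
  have hiu : i ≤ u := le_trans (Finset.card_le_card (Finset.filter_subset _ _)) hU
  have hUoutcard : Uout.card ≤ u - i := by
    have hdisj : Disjoint Uin Uout := by
      rw [Finset.disjoint_left]
      intro e h1e h2e
      exact (Finset.mem_filter.1 h2e).2 (Finset.mem_filter.1 h1e).2
    have hsub : Uin ∪ Uout ⊆ R.U :=
      Finset.union_subset (Finset.filter_subset _ _) (Finset.filter_subset _ _)
    have h : Uin.card + Uout.card ≤ R.U.card := by
      rw [← Finset.card_union_of_disjoint hdisj]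
      exact Finset.card_le_card hsub
    omega
  have hDcard : D.card ≤ i + 2 := by
    have hsub : D ⊆ S₀ ∪ Uin.image Prod.snd := by
      intro p hp
      obtain ⟨q, hq, hr⟩ := (hmemD p).1 hp
      rcases Relation.ReflTransGen.cases_tail hr with h | ⟨x, hx, he⟩
      · subst h; exact Finset.mem_union_left _ hq
      · refine Finset.mem_union_right _ ?_
        have hxD : x ∈ D := (hmemD x).2 ⟨q, hq, hx⟩
        exact Finset.mem_image.2 ⟨(x, p), Finset.mem_filter.2 ⟨he, hxD⟩, rfl⟩
    calc D.card ≤ (S₀ ∪ Uin.image Prod.snd).card := Finset.card_le_card hsub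
      _ ≤ S₀.card + (Uin.image Prod.snd).card := Finset.card_union_le _ _
      _ ≤ 2 + i := add_le_add h2 Finset.card_image_le
      _ = i + 2 := by omega
  have hBd : R.B.card ≤ d := by
    have hsub : (↑R.B : Set (Fin n)) ⊆ DefSet R := by
      intro b hb I' hI' hbI'
      exact (Finset.disjoint_left.1 hI'.1) hbI' hb
    calc R.B.card = (↑R.B : Set (Fin n)).ncard := (Set.ncard_coe_finset _).symm
      _ ≤ (DefSet R).ncard := Set.ncard_le_ncard hsub (Set.toFinite _)
      _ ≤ d := hd
  set CF := R.C.filter (fun s => ¬ ∀ x ∈ s, x ∈ D) with hCF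
  have hex : ∀ s ∈ CF, ∃ x, x ∈ s ∧ x ∉ D := by
    intro s hs
    have h := (Finset.mem_filter.1 hs).2
    push_neg at h
    obtain ⟨x, hx1, hx2⟩ := h
    exact ⟨x, hx1, hx2⟩
  set confPick := CF.attach.image (fun s => (hex s.1 s.2).choose) with hconf
  have hconfNotD : ∀ p ∈ confPick, p ∉ D := by
    intro p hp
    obtain ⟨s, -, rfl⟩ := Finset.mem_image.1 hp
    exact (hex s.1 s.2).choose_spec.2
  have hconfcard : confPick.card ≤ c := by
    calc confPick.card ≤ CF.attach.card := Finset.card_image_le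
      _ = CF.card := Finset.card_attach
      _ ≤ R.C.card := Finset.card_le_card (Finset.filter_subset _ _)
      _ ≤ c := hCc
  have hconfHit : ∀ s ∈ R.C, ¬ (∀ x ∈ s, x ∈ D) → ∃ p ∈ confPick, p ∈ s := by
    intro s hs hns
    have hsCF : s ∈ CF := Finset.mem_filter.2 ⟨hs, hns⟩
    exact ⟨(hex s hsCF).choose,
      Finset.mem_image.2 ⟨⟨s, hsCF⟩, Finset.mem_attach _ _, rfl⟩,
      (hex s hsCF).choose_spec.1⟩
  set S₁ := R.B ∪ Uout.image Prod.fst ∪ confPick ∪ Q with hS₁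
  have hBS₁ : R.B ⊆ S₁ := by
    intro b hb; simp [hS₁, hb]
  have hUoutS₁ : Uout.image Prod.fst ⊆ S₁ := by
    intro b hb; simp [hS₁, hb]
  have hconfS₁ : confPick ⊆ S₁ := by
    intro b hb; simp [hS₁, hb]
  have hQS₁ : Q ⊆ S₁ := by
    intro b hb; simp [hS₁, hb]
  have hS₁D : Disjoint S₁ D := by
    rw [Finset.disjoint_left]
    intro a ha haD
    simp only [hS₁, Finset.mem_union] at ha
    rcases ha with ((ha | ha) | ha) | ha
    · exact (Finset.disjoint_left.1 hI.1) (hDI haD) ha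
    · obtain ⟨e, he, rfl⟩ := Finset.mem_image.1 ha
      exact (Finset.mem_filter.1 he).2 haD
    · exact hconfNotD a ha haD
    · exact (Finset.disjoint_left.1 hQ) ha (hDI haD)
  have hS₁card : S₁.card ≤ d + c + (u - i) + 1 := by
    have h1' : S₁.card ≤ (R.B ∪ Uout.image Prod.fst ∪ confPick).card + Q.card :=
      Finset.card_union_le _ _
    have h2' : (R.B ∪ Uout.image Prod.fst ∪ confPick).card ≤
        (R.B ∪ Uout.image Prod.fst).card + confPick.card :=
      Finset.card_union_le _ _
    have h3' : (R.B ∪ Uout.image Prod.fst).card ≤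
        R.B.card + (Uout.image Prod.fst).card :=
      Finset.card_union_le _ _
    have h4' : (Uout.image Prod.fst).card ≤ u - i :=
      le_trans Finset.card_image_le hUoutcard
    omega
  have hDpos : 1 ≤ D.card :=
    Finset.card_pos.2 (h1.mono hS₀D)
  obtain ⟨v, hvF, hvS₁, hDv⟩ := hF i hiu S₁ D hS₁D hS₁card hDpos hDcard
  refine ⟨v, Finset.mem_biUnion.2 ⟨i, Finset.mem_range.2 (by omega), hvF⟩,
    ⟨?_, ?_, ?_⟩, fun p hp => hDv (hS₀D hp), ?_⟩
  · rw [Finset.disjoint_left]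
    intro b hbv hbB
    exact (Finset.disjoint_left.1 hvS₁) hbv (hBS₁ hbB)
  · intro e he h1e
    rw [hK, Finset.empty_union] at he
    by_cases hx : e.1 ∈ D
    · exact hDv (hDclosed e he hx)
    · exact absurd h1e (fun h =>
        (Finset.disjoint_left.1 hvS₁) h
          (hUoutS₁ (Finset.mem_image.2 ⟨e, Finset.mem_filter.2 ⟨he, hx⟩, rfl⟩)) )
  · intro s hs hall
    by_cases hD' : ∀ x ∈ s, x ∈ D
    · exact hI.2.2 s hs (fun x hx => hDI (hD' x hx))
    · obtain ⟨p, hpC, hps⟩ := hconfHit s hs hD'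
      exact (Finset.disjoint_left.1 hvS₁) (hall p hps) (hconfS₁ hpC)
  · rw [Finset.disjoint_left]
    intro b hbv hbQ
    exact (Finset.disjoint_left.1 hvS₁) hbv (hQS₁ hbQ)

/-- Improved test design: with all dependencies unknown (`K = ∅`), at most `u`
unknown dependencies, at most `c` conflicts and at most `d` defects, the union
of families `F i` (for `i = 0, …, u`), where `F i` satisfies the
`(≤d+c+(u-i)+1, ≤i+2)`-covering property, determines the full structure. -/
theorem full_learning_union_upper_bound (n u c d : ℕ) (R : Repo n)
    (hK : R.K = ∅) (hU : R.U.card ≤ u) (hCc : R.C.card ≤ c)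
    (hd : (DefSet R).ncard ≤ d)
    (F : ℕ → Finset (Finset (Fin n)))
    (hF : ∀ i ≤ u, CoveringLE n (d + c + (u - i) + 1) (i + 2) (F i)) :
    (∀ p : Fin n,
        Defective R p ↔ Sset R ((Finset.range (u + 1)).biUnion F) p = ∅) ∧
      (∀ p q : Fin n,
        WeakConflict R p q ↔
          Sset R ((Finset.range (u + 1)).biUnion F) p ∩
            Sset R ((Finset.range (u + 1)).biUnion F) q = ∅) ∧
      (∀ p q : Fin n,
        WeakDep R p q ↔
          Sset R ((Finset.range (u + 1)).biUnion F) p ⊆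
            Sset R ((Finset.range (u + 1)).biUnion F) q) := by
  classical
  set T := (Finset.range (u + 1)).biUnion F with hT
  refine ⟨?_, ?_, ?_⟩
  · intro p
    constructor
    · intro hp
      ext t
      simp only [Sset, Set.mem_setOf_eq, Set.mem_empty_iff_false, iff_false]
      rintro ⟨-, hts, hpt⟩
      exact hp t hts hpt
    · intro hS I hI hpI
      obtain ⟨v, hvT, hvS, hpv, -⟩ := key_lemma R hK hU hCc hd F hF I hI {p}
        (Finset.singleton_subset_iff.2 hpI) ⟨p, Finset.mem_singleton_self p⟩
        (by simp) ∅ (by simp) (by simp)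
      have hv : v ∈ Sset R T p := ⟨hvT, hvS, hpv (Finset.mem_singleton_self p)⟩
      rw [hS] at hv; exact hv
  · intro p q
    constructor
    · intro h
      ext t
      simp only [Set.mem_inter_iff, Sset, Set.mem_setOf_eq,
        Set.mem_empty_iff_false, iff_false]
      rintro ⟨⟨-, hts, hpt⟩, ⟨-, -, hqt⟩⟩
      exact h t hts ⟨hpt, hqt⟩
    · rintro hS I hI ⟨hpI, hqI⟩
      obtain ⟨v, hvT, hvS, hsub, -⟩ := key_lemma R hK hU hCc hd F hF I hI {p, q}
        (by
          intro x hx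
          rcases Finset.mem_insert.1 hx with rfl | hx
          · exact hpI
          · rw [Finset.mem_singleton.1 hx]; exact hqI)
        ⟨p, by simp⟩ (le_trans (Finset.card_insert_le _ _) (by simp))
        ∅ (by simp) (by simp)
      have hv : v ∈ Sset R T p ∩ Sset R T q :=
        ⟨⟨hvT, hvS, hsub (by simp)⟩, ⟨hvT, hvS, hsub (by simp)⟩⟩
      rw [hS] at hv; exact hv
  · intro p q
    constructor
    · rintro h t ⟨htT, hts, hpt⟩
      exact ⟨htT, hts, h t hts hpt⟩
    · intro hS I hI hpI
      by_contra hqI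
      obtain ⟨v, hvT, hvS, hsub, hdisj⟩ := key_lemma R hK hU hCc hd F hF I hI {p}
        (Finset.singleton_subset_iff.2 hpI) ⟨p, Finset.mem_singleton_self p⟩
        (by simp) {q} (Finset.disjoint_singleton_left.2 hqI) (by simp)
      have hv : v ∈ Sset R T p := ⟨hvT, hvS, hsub (Finset.mem_singleton_self p)⟩
      have hq := hS hv
      exact (Finset.disjoint_left.1 hdisj) hq.2.2 (Finset.mem_singleton_self q)
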